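/- Let X be a real symmetric positive semidefinite 4n×4n matrix, viewed in 4×4 block form with n×n blocks X_{(a,b)} for block indices a,b ∈ {0,1,2,3}. Define the real n×n matrices R_X = X_{(0,0)} + X_{(1,1)} + X_{(2,2)} + X_{(3,3)}, I_X = X_{(1,0)} − X_{(0,1)} + X_{(3,2)} − X_{(2,3)}, J_X = X_{(2,0)} − X_{(0,2)} − X_{(3,1)} + X_{(1,3)}, K_X = X_{(3,0)} − X_{(0,3)} + X_{(2,1)} − X_{(1,2)}. Then the quaternion matrix H_X := R_X + I_X·i + J_X·j + K_X·k is Hermitian and quaternion-PSD (Re(v* H_X v) ≥ 0 for all v ∈ ℍ^n). -/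

import Mathlib

/-!
Each entry of `H_X` is a quaternion `Q(M)` depending linearly on one `4 × 4` block `M` of `X`,
with `Q(Mᵀ) = star Q(M)` and, for `e = (1, i, j, k)`,
`Re (star p * Q(M) * q) = ∑ c, (p * e c)ᵀ M (q * e c)`, quaternions read as vectors of `ℝ⁴`.
So `H_X` is Hermitian because `X` is symmetric, and `Re (v* H_X v) = ∑ c, y_cᵀ X y_c ≥ 0`,
where `y_c ∈ ℝ^{4n}` is the real coordinate vector of `v * e c`.
-/

open Matrix

/-- The quaternion matrix `H_X = R_X + I_X·i + J_X·j + K_X·k` built from the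
`4 × 4` block structure of a real `4n × 4n` matrix `X`. -/
noncomputable def quatOfBlocks {n : ℕ}
    (X : Matrix (Fin 4 × Fin n) (Fin 4 × Fin n) ℝ) :
    Matrix (Fin n) (Fin n) (Quaternion ℝ) := fun k l =>
  ⟨X (0, k) (0, l) + X (1, k) (1, l) + X (2, k) (2, l) + X (3, k) (3, l),
   X (1, k) (0, l) - X (0, k) (1, l) + X (3, k) (2, l) - X (2, k) (3, l),
   X (2, k) (0, l) - X (0, k) (2, l) - X (3, k) (1, l) + X (1, k) (3, l),
   X (3, k) (0, l) - X (0, k) (3, l) + X (2, k) (1, l) - X (1, k) (2, l)⟩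

open Quaternion

theorem Quaternion.re_sum {ι R : Type*} [CommRing R] (s : Finset ι) (f : ι → ℍ[R]) :
    (∑ i ∈ s, f i).re = ∑ i ∈ s, (f i).re :=
  map_sum (QuaternionAlgebra.reₗ (-1 : R) 0 (-1)) f s

theorem dotProduct_mulVec_eq_sum_submatrix {R ι ι' κ κ' : Type*} [NonUnitalNonAssocSemiring R]
    [Fintype ι] [Fintype ι'] [Fintype κ] [Fintype κ']
    (X : Matrix (ι × κ) (ι' × κ') R) (u : ι × κ → R) (w : ι' × κ' → R) :
    u ⬝ᵥ X *ᵥ w =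
      ∑ k, ∑ l,
        (fun a => u (a, k)) ⬝ᵥ X.submatrix (·, k) (·, l) *ᵥ fun b => w (b, l) := by
  simp only [dotProduct, mulVec, Fintype.sum_prod_type_right, Finset.mul_sum, submatrix_apply]
  exact Finset.sum_congr rfl fun k _ => Finset.sum_comm

/-- With `e = (1, i, j, k)`, this is `∑ a b, M a b • (e a * star (e b))`. -/
@[simps]
def quatOfMatrix (M : Matrix (Fin 4) (Fin 4) ℝ) : ℍ[ℝ] :=
  ⟨M 0 0 + M 1 1 + M 2 2 + M 3 3,
   M 1 0 - M 0 1 + M 3 2 - M 2 3,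
   M 2 0 - M 0 2 - M 3 1 + M 1 3,
   M 3 0 - M 0 3 + M 2 1 - M 1 2⟩

theorem quatOfMatrix_transpose (M : Matrix (Fin 4) (Fin 4) ℝ) :
    quatOfMatrix Mᵀ = star (quatOfMatrix M) := by
  ext <;> simp <;> ring

def quatBasis (c : Fin 4) : ℍ[ℝ] := (equivTuple ℝ).symm (Pi.single c 1)

theorem re_star_mul_quatOfMatrix_mul (M : Matrix (Fin 4) (Fin 4) ℝ) (p q : ℍ[ℝ]) :
    (star p * quatOfMatrix M * q).re =
      ∑ c, equivTuple ℝ (p * quatBasis c) ⬝ᵥ M *ᵥ equivTuple ℝ (q * quatBasis c) := by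
  simp only [re_mul, imI_mul, imJ_mul, imK_mul, re_star, imI_star, imJ_star, imK_star,
    re_quatOfMatrix, imI_quatOfMatrix, imJ_quatOfMatrix, imK_quatOfMatrix, equivTuple_apply,
    dotProduct, mulVec, Fin.sum_univ_four, cons_val_zero, cons_val_one, cons_val]
  simp only [quatBasis, equivTuple_symm_apply, Pi.single_eq_same, Pi.single_eq_of_ne, ne_eq,
    Fin.reduceEq, not_false_eq_true]
  ring

def realCoords {ι : Type*} (v : ι → ℍ[ℝ]) : Fin 4 × ι → ℝ :=
  fun x => equivTuple ℝ (v x.2) x.1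

theorem quatOfBlocks_apply {n : ℕ} (X : Matrix (Fin 4 × Fin n) (Fin 4 × Fin n) ℝ)
    (k l : Fin n) :
    quatOfBlocks X k l = quatOfMatrix (X.submatrix (·, k) (·, l)) := rfl

theorem isHermitian_quatOfBlocks {n : ℕ} {X : Matrix (Fin 4 × Fin n) (Fin 4 × Fin n) ℝ}
    (hX : X.IsSymm) : (quatOfBlocks X).IsHermitian := by
  ext k l : 1
  rw [conjTranspose_apply, quatOfBlocks_apply, quatOfBlocks_apply, ← quatOfMatrix_transpose,
    transpose_submatrix, hX.eq]

theorem re_sum_star_mul_quatOfBlocks_mul {n : ℕ}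
    (X : Matrix (Fin 4 × Fin n) (Fin 4 × Fin n) ℝ) (v : Fin n → ℍ[ℝ]) :
    (∑ k, ∑ l, star (v k) * quatOfBlocks X k l * v l).re =
      ∑ c, realCoords (fun k => v k * quatBasis c) ⬝ᵥ
        X *ᵥ realCoords (fun k => v k * quatBasis c) := by
  simp only [dotProduct_mulVec_eq_sum_submatrix, re_sum, quatOfBlocks_apply,
    re_star_mul_quatOfMatrix_mul]
  exact (Finset.sum_congr rfl fun k _ => Finset.sum_comm).trans Finset.sum_comm

/-- If `X` is a real symmetric positive semidefinite `4n × 4n` matrix, then the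
quaternion matrix `H_X` is Hermitian and quaternion-PSD. -/
theorem quatOfBlocks_hermitian_psd {n : ℕ}
    (X : Matrix (Fin 4 × Fin n) (Fin 4 × Fin n) ℝ) (hX : X.PosSemidef) :
    quatOfBlocks X = (quatOfBlocks X)ᴴ ∧
      ∀ v : Fin n → Quaternion ℝ,
        0 ≤ (∑ k, ∑ l, star (v k) * quatOfBlocks X k l * v l).re := by
  refine ⟨(isHermitian_quatOfBlocks (isHermitian_iff_isSymm.mp hX.isHermitian)).symm,
    fun v => ?_⟩
  rw [re_sum_star_mul_quatOfBlocks_mul]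
  exact Finset.sum_nonneg fun c _ => by
    simpa only [star_trivial] using hX.dotProduct_mulVec_nonneg _
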